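/- arXiv:2007.11386 — 9 statements merged into one kernel-verified Lean document; each statement's English description precedes it below -/
import Mathlib

section
/- If a random choice rule p satisfies Luce's Choice Axiom, then the support correspondence A ↦ supp p_A is a rational choice correspondence: it satisfies WARP, i.e., if B ⊆ A and supp p_A ∩ B ≠ ∅ then supp p_B = supp p_A ∩ B. -/
/-! Luce's axiom makes `p_A` restricted to `B` a positive multiple of `p_B`, the factor being
`p_A(B)`, which is positive as soon as `B` meets `supp p_A`. Positivity is preserved by such a
rescaling, so the two supports agree on `B`. -/

theorem Finset.filter_pos_eq_filter_pos_inter_of_eq_mul {X : Type*} [DecidableEq X]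
    {A B : Finset X} {f g : X → ℝ} {s : ℝ} (hBA : B ⊆ A) (hs : 0 < s)
    (hfg : ∀ a ∈ B, f a = g a * s) :
    B.filter (fun a => 0 < g a) = A.filter (fun a => 0 < f a) ∩ B := by
  ext a
  simp only [Finset.mem_inter, Finset.mem_filter]
  constructor
  · rintro ⟨haB, hga⟩
    exact ⟨⟨hBA haB, (hfg a haB).symm ▸ mul_pos hga hs⟩, haB⟩
  · rintro ⟨⟨-, hfa⟩, haB⟩
    exact ⟨haB, (mul_pos_iff_of_pos_right hs).mp (hfg a haB ▸ hfa)⟩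

theorem choice_axiom_implies_support_warp_general
    {X : Type*} [DecidableEq X] (p : Finset X → X → ℝ)
    (hpos : ∀ A a, 0 ≤ p A a)
    (hCA : ∀ A B : Finset X, B.Nonempty → B ⊆ A → ∀ a ∈ B,
      p A a = p B a * ∑ b ∈ B, p A b) :
    ∀ A B : Finset X, B.Nonempty → B ⊆ A →
      (A.filter (fun a => 0 < p A a) ∩ B).Nonempty →
      B.filter (fun a => 0 < p B a) = A.filter (fun a => 0 < p A a) ∩ B := by
  rintro A B hB hBA ⟨c, hc⟩
  simp only [Finset.mem_inter, Finset.mem_filter] at hc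
  obtain ⟨⟨-, hcpos⟩, hcB⟩ := hc
  have hmass : 0 < ∑ b ∈ B, p A b :=
    Finset.sum_pos' (fun b _ => hpos A b) ⟨c, hcB, hcpos⟩
  exact Finset.filter_pos_eq_filter_pos_inter_of_eq_mul hBA hmass (hCA A B hB hBA)

/-- If a random choice rule satisfies Luce's Choice Axiom, then its support
correspondence satisfies WARP: if `B ⊆ A` and `supp p_A ∩ B ≠ ∅` then
`supp p_B = supp p_A ∩ B`. -/
theorem choice_axiom_implies_support_warp
    {X : Type*} [DecidableEq X] (p : Finset X → X → ℝ)
    (hpos : ∀ A a, 0 ≤ p A a)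
    (hout : ∀ A a, a ∉ A → p A a = 0)
    (hsum : ∀ A : Finset X, A.Nonempty → ∑ a ∈ A, p A a = 1)
    (hCA : ∀ A B : Finset X, B.Nonempty → B ⊆ A → ∀ a ∈ B,
      p A a = p B a * ∑ b ∈ B, p A b) :
    ∀ A B : Finset X, B.Nonempty → B ⊆ A →
      (A.filter (fun a => 0 < p A a) ∩ B).Nonempty →
      B.filter (fun a => 0 < p B a) = A.filter (fun a => 0 < p A a) ∩ B :=
  choice_axiom_implies_support_warp_general p hpos hCA
end

section
/- Let v : X → (0,∞) and let Γ : 𝒜 → 𝒜 be a choice correspondence (Γ(A) ⊆ A nonempty) satisfying WARP. Then the function p defined by p(a,A) = v(a)/Σ_{b∈Γ(A)} v(b) if a ∈ Γ(A) and p(a,A) = 0 otherwise, is a random choice rule satisfying Luce's Choice Axiom, and supp p_A = Γ(A) for all A. -/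
/-!
On each menu `A` the rule is the Luce rule with weights `v` restricted to `Γ A`. For `B ⊆ A`
meeting `Γ A`, WARP gives `Γ B = Γ A ∩ B`, and the Luce rule on a set `S` factors through any
`S ∩ B`: `v a / Σ_S v = (v a / Σ_{S ∩ B} v) · (Σ_{S ∩ B} v / Σ_S v)`. If `B` misses `Γ A`,
both sides of the choice axiom vanish.
-/

open Finset

section

variable {X : Type*} [DecidableEq X]

noncomputable def luceProb (v : X → ℝ) (S : Finset X) (a : X) : ℝ :=
  if a ∈ S then v a / ∑ b ∈ S, v b else 0

variable (v : X → ℝ) (S : Finset X)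

theorem luceProb_of_mem {a : X} (ha : a ∈ S) : luceProb v S a = v a / ∑ b ∈ S, v b := by
  simp [luceProb, ha]

theorem luceProb_of_not_mem {a : X} (ha : a ∉ S) : luceProb v S a = 0 := by
  simp [luceProb, ha]

theorem luceProb_nonneg (hv : ∀ x, 0 ≤ v x) (a : X) : 0 ≤ luceProb v S a := by
  by_cases ha : a ∈ S
  · rw [luceProb_of_mem v S ha]
    exact div_nonneg (hv a) (sum_nonneg fun b _ => hv b)
  · rw [luceProb_of_not_mem v S ha]

theorem luceProb_pos_iff (hv : ∀ x, 0 < v x) {a : X} : 0 < luceProb v S a ↔ a ∈ S := by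
  by_cases ha : a ∈ S
  · rw [luceProb_of_mem v S ha]
    exact iff_of_true (div_pos (hv a) (sum_pos (fun b _ => hv b) ⟨a, ha⟩)) ha
  · rw [luceProb_of_not_mem v S ha]
    exact iff_of_false (lt_irrefl 0) ha

theorem sum_luceProb (B : Finset X) :
    ∑ b ∈ B, luceProb v S b = (∑ b ∈ S ∩ B, v b) / ∑ b ∈ S, v b := by
  simp only [luceProb, sum_ite_mem, sum_div]
  rw [inter_comm]

theorem sum_luceProb_of_subset (hv : ∀ x, 0 < v x) {A : Finset X} (hS : S.Nonempty)
    (hSA : S ⊆ A) : ∑ a ∈ A, luceProb v S a = 1 := by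
  rw [sum_luceProb, inter_eq_left.mpr hSA]
  exact div_self (sum_pos (fun b _ => hv b) hS).ne'

theorem luceProb_eq_inter_mul_sum (hv : ∀ x, 0 < v x) (B : Finset X) {a : X}
    (haB : a ∈ B) :
    luceProb v S a = luceProb v (S ∩ B) a * ∑ b ∈ B, luceProb v S b := by
  by_cases haS : a ∈ S
  · have haSB : a ∈ S ∩ B := mem_inter.mpr ⟨haS, haB⟩
    have hSB : 0 < ∑ b ∈ S ∩ B, v b := sum_pos (fun b _ => hv b) ⟨a, haSB⟩
    have hS : 0 < ∑ b ∈ S, v b := sum_pos (fun b _ => hv b) ⟨a, haS⟩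
    rw [luceProb_of_mem v S haS, luceProb_of_mem v _ haSB, sum_luceProb]
    field_simp
  · have haSB : a ∉ S ∩ B := fun h => haS (mem_inter.mp h).1
    rw [luceProb_of_not_mem v S haS, luceProb_of_not_mem v _ haSB, zero_mul]

end

/-- If `v : X → (0,∞)` and `Γ` is a choice correspondence satisfying WARP, then
`p(a,A) = v(a)/Σ_{b∈Γ(A)} v(b)` for `a ∈ Γ(A)` (and `0` otherwise) defines a random
choice rule satisfying Luce's Choice Axiom, with `supp p_A = Γ(A)`. -/
theorem luce_form_satisfies_choice_axiom
    {X : Type*} [DecidableEq X] (v : X → ℝ) (hv : ∀ x, 0 < v x)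
    (Γ : Finset X → Finset X)
    (hΓsub : ∀ A : Finset X, A.Nonempty → Γ A ⊆ A)
    (hΓne : ∀ A : Finset X, A.Nonempty → (Γ A).Nonempty)
    (hWARP : ∀ A B : Finset X, B.Nonempty → B ⊆ A →
      (Γ A ∩ B).Nonempty → Γ B = Γ A ∩ B)
    (p : Finset X → X → ℝ)
    (hp : ∀ A : Finset X, ∀ a : X,
      p A a = if a ∈ Γ A then v a / ∑ b ∈ Γ A, v b else 0) :
    (∀ A a, 0 ≤ p A a) ∧
    (∀ A a, a ∉ A → A.Nonempty → p A a = 0) ∧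
    (∀ A : Finset X, A.Nonempty → ∑ a ∈ A, p A a = 1) ∧
    (∀ A B : Finset X, B.Nonempty → B ⊆ A → ∀ a ∈ B,
      p A a = p B a * ∑ b ∈ B, p A b) ∧
    (∀ A : Finset X, A.Nonempty → A.filter (fun a => 0 < p A a) = Γ A) := by
  obtain rfl : p = fun A => luceProb v (Γ A) :=
    funext fun A => funext (hp A)
  refine ⟨fun A => luceProb_nonneg v _ (fun x => (hv x).le),
    fun A a haA hA => luceProb_of_not_mem v _ fun ha => haA (hΓsub A hA ha),
    fun A hA => sum_luceProb_of_subset v _ hv (hΓne A hA) (hΓsub A hA), ?_, ?_⟩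
  · intro A B hB hBA a haB
    dsimp only
    by_cases hmeet : (Γ A ∩ B).Nonempty
    · rw [hWARP A B hB hBA hmeet]
      exact luceProb_eq_inter_mul_sum v _ hv B haB
    · have hmiss : Γ A ∩ B = ∅ := not_nonempty_iff_eq_empty.mp hmeet
      have haΓ : a ∉ Γ A := fun ha => hmeet ⟨a, mem_inter.mpr ⟨ha, haB⟩⟩
      simp only [luceProb_of_not_mem v _ haΓ, sum_luceProb, hmiss, sum_empty, zero_div,
        mul_zero]
  · intro A hA
    ext a
    rw [mem_filter, luceProb_pos_iff v _ hv]
    exact ⟨And.right, fun ha => ⟨hΓsub A hA ha, ha⟩⟩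
end

section
/- A random choice rule p satisfies Luce's Choice Axiom if and only if there exist a function v : X → (0,∞) and a choice correspondence Γ satisfying WARP such that p(a,A) = v(a)/Σ_{b∈Γ(A)} v(b) if a ∈ Γ(A) and p(a,A) = 0 otherwise, for all A ∈ 𝒜 and a ∈ A. Moreover in this case Γ is unique and equals the support correspondence of p. -/
/-!
The Luce form implies the Choice Axiom by a direct computation, using WARP to identify
`Γ B` with `Γ A ∩ B`; positivity of `v` forces `Γ` to be the support of `p`.

Conversely, under the Choice Axiom the support correspondence satisfies WARP, and two
alternatives are chosen together from some menu iff both are chosen with positive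
probability from their pair. This is an equivalence relation, and within a class the
ratio `p(a,A) / p(b,A)` does not depend on the menu `A`. Measuring every alternative
against a fixed representative `c` of its class, `v(a) = p(a,{c,a}) / p(c,{c,a})`,
gives the weights.
-/

open Finset

namespace RandomChoice

variable {X : Type*}

noncomputable def supp (p : Finset X → X → ℝ) (A : Finset X) : Finset X :=
  A.filter (fun a => 0 < p A a)

lemma mem_supp {p : Finset X → X → ℝ} {A : Finset X} {a : X} :
    a ∈ supp p A ↔ a ∈ A ∧ 0 < p A a :=
  mem_filter

lemma supp_subset (p : Finset X → X → ℝ) (A : Finset X) : supp p A ⊆ A :=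
  filter_subset _ _

lemma sum_supp {p : Finset X → X → ℝ} (hpos : ∀ A a, 0 ≤ p A a) (A : Finset X) :
    ∑ b ∈ supp p A, p A b = ∑ b ∈ A, p A b :=
  sum_filter_of_ne fun a _ h => (hpos A a).lt_of_ne' h

def IsChoiceCorrespondence (Γ : Finset X → Finset X) : Prop :=
  ∀ A : Finset X, A.Nonempty → Γ A ⊆ A ∧ (Γ A).Nonempty

section RandomChoiceRule

variable {p : Finset X → X → ℝ} (hpos : ∀ A a, 0 ≤ p A a)
  (hsum : ∀ A : Finset X, A.Nonempty → ∑ a ∈ A, p A a = 1)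
include hpos hsum

lemma supp_nonempty {A : Finset X} (hA : A.Nonempty) : (supp p A).Nonempty := by
  rw [nonempty_iff_ne_empty]
  intro h
  have := hsum A hA
  rw [← sum_supp hpos, h, sum_empty] at this
  exact zero_ne_one this

lemma isChoiceCorrespondence_supp : IsChoiceCorrespondence (supp p) :=
  fun _ hA => ⟨supp_subset p _, supp_nonempty hpos hsum hA⟩

end RandomChoiceRule

variable [DecidableEq X]

def ChoiceAxiom (p : Finset X → X → ℝ) : Prop :=
  ∀ A B : Finset X, B.Nonempty → B ⊆ A → ∀ a ∈ B, p A a = p B a * ∑ b ∈ B, p A b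

def SatisfiesWARP (Γ : Finset X → Finset X) : Prop :=
  ∀ A B : Finset X, B.Nonempty → B ⊆ A → (Γ A ∩ B).Nonempty → Γ B = Γ A ∩ B

def IsLuceForm (p : Finset X → X → ℝ) (v : X → ℝ) (Γ : Finset X → Finset X) : Prop :=
  ∀ A : Finset X, A.Nonempty → ∀ a ∈ A, p A a = if a ∈ Γ A then v a / ∑ b ∈ Γ A, v b else 0

section LuceForm

variable {p : Finset X → X → ℝ} {v : X → ℝ} {Γ : Finset X → Finset X}
  (hv : ∀ x, 0 < v x) (hΓ : IsChoiceCorrespondence Γ) (hrep : IsLuceForm p v Γ)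

include hv hΓ hrep in
lemma IsLuceForm.eq_supp {A : Finset X} (hA : A.Nonempty) : Γ A = supp p A := by
  have hS : 0 < ∑ b ∈ Γ A, v b := sum_pos (fun b _ => hv b) (hΓ A hA).2
  ext a
  rw [mem_supp]
  constructor
  · intro ha
    have haA := (hΓ A hA).1 ha
    rw [hrep A hA a haA, if_pos ha]
    exact ⟨haA, div_pos (hv a) hS⟩
  · rintro ⟨haA, hpa⟩
    by_contra ha
    rw [hrep A hA a haA, if_neg ha] at hpa
    exact hpa.false

include hrep in
lemma IsLuceForm.sum_eq {A B : Finset X} (hA : A.Nonempty) (hBA : B ⊆ A) :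
    ∑ b ∈ B, p A b = (∑ b ∈ Γ A ∩ B, v b) / ∑ b ∈ Γ A, v b := by
  rw [sum_congr rfl fun b hb => hrep A hA b (hBA hb), sum_ite_mem, inter_comm, sum_div]

include hv hΓ hrep in
lemma IsLuceForm.choiceAxiom (hW : SatisfiesWARP Γ) : ChoiceAxiom p := by
  intro A B hB hBA a ha
  have hA : A.Nonempty := hB.mono hBA
  rw [hrep A hA a (hBA ha), hrep B hB a ha, hrep.sum_eq hA hBA]
  by_cases hint : (Γ A ∩ B).Nonempty
  · have hSA : 0 < ∑ b ∈ Γ A, v b := sum_pos (fun b _ => hv b) (hΓ A hA).2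
    have hSB : 0 < ∑ b ∈ Γ A ∩ B, v b := sum_pos (fun b _ => hv b) hint
    rw [hW A B hB hBA hint]
    by_cases haΓ : a ∈ Γ A
    · rw [if_pos haΓ, if_pos (mem_inter.mpr ⟨haΓ, ha⟩)]
      field_simp
    · rw [if_neg haΓ, if_neg fun h => haΓ (mem_inter.mp h).1, zero_mul]
  · have haΓ : a ∉ Γ A := fun h => hint ⟨a, mem_inter.mpr ⟨h, ha⟩⟩
    rw [not_nonempty_iff_eq_empty.mp hint, sum_empty, zero_div, mul_zero, if_neg haΓ]

end LuceForm

section ChoiceAxiom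

variable {p : Finset X → X → ℝ} (hpos : ∀ A a, 0 ≤ p A a)
  (hsum : ∀ A : Finset X, A.Nonempty → ∑ a ∈ A, p A a = 1) (hl : ChoiceAxiom p)

include hpos hl in
lemma satisfiesWARP_supp : SatisfiesWARP (supp p) := by
  intro A B hB hBA ⟨c, hc⟩
  obtain ⟨hcA, hcB⟩ := mem_inter.mp hc
  have hs : 0 < ∑ b ∈ B, p A b := sum_pos' (fun b _ => hpos A b) ⟨c, hcB, (mem_supp.mp hcA).2⟩
  ext x
  simp only [mem_inter, mem_supp]
  constructor
  · rintro ⟨hxB, hx⟩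
    exact ⟨⟨hBA hxB, hl A B hB hBA x hxB ▸ mul_pos hx hs⟩, hxB⟩
  · rintro ⟨⟨-, hx⟩, hxB⟩
    rw [hl A B hB hBA x hxB] at hx
    exact ⟨hxB, (mul_pos_iff_of_pos_right hs).mp hx⟩

include hl in
lemma ChoiceAxiom.mul_eq_mul {A B : Finset X} {a b : X}
    (haA : a ∈ A) (hbA : b ∈ A) (haB : a ∈ B) (hbB : b ∈ B) :
    p A a * p B b = p A b * p B a := by
  have pair_subset : ∀ {C : Finset X}, a ∈ C → b ∈ C → ({a, b} : Finset X) ⊆ C :=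
    fun ha hb => insert_subset ha (singleton_subset_iff.mpr hb)
  have hne : ({a, b} : Finset X).Nonempty := insert_nonempty a {b}
  rw [hl A {a, b} hne (pair_subset haA hbA) a (by simp),
    hl A {a, b} hne (pair_subset haA hbA) b (by simp),
    hl B {a, b} hne (pair_subset haB hbB) a (by simp),
    hl B {a, b} hne (pair_subset haB hbB) b (by simp)]
  ring

def PairPositive (p : Finset X → X → ℝ) (a b : X) : Prop :=
  0 < p {a, b} a ∧ 0 < p {a, b} b

lemma PairPositive.symm {a b : X} (h : PairPositive p a b) : PairPositive p b a := by
  rw [PairPositive, pair_comm]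
  exact ⟨h.2, h.1⟩

include hsum in
lemma pairPositive_refl (a : X) : PairPositive p a a := by
  have h := hsum {a} (singleton_nonempty a)
  rw [sum_singleton] at h
  simp only [PairPositive, pair_eq_singleton, h, zero_lt_one, and_self]

include hpos hl in
lemma pairPositive_iff_mem_supp {A : Finset X} {a b : X} (ha : a ∈ supp p A) (hb : b ∈ A) :
    PairPositive p a b ↔ b ∈ supp p A := by
  have hpair := satisfiesWARP_supp hpos hl A {a, b} (insert_nonempty a {b})
    (insert_subset (supp_subset p A ha) (singleton_subset_iff.mpr hb))
    ⟨a, mem_inter.mpr ⟨ha, mem_insert_self a {b}⟩⟩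
  have hmem : ∀ x ∈ ({a, b} : Finset X), (0 < p {a, b} x ↔ x ∈ supp p A) := fun x hx => by
    rw [← mem_inter.trans (and_iff_left hx), ← hpair, mem_supp, and_iff_right hx]
  rw [PairPositive, hmem a (by simp), hmem b (by simp), and_iff_right ha]

include hpos hsum hl in
lemma mem_supp_of_forall_pairPositive {T : Finset X} {b : X} (hb : b ∈ T)
    (h : ∀ x ∈ T, PairPositive p x b) : b ∈ supp p T := by
  obtain ⟨x, hx⟩ := supp_nonempty hpos hsum ⟨b, hb⟩
  exact (pairPositive_iff_mem_supp hpos hl hx hb).mp (h x (supp_subset p T hx))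

include hpos hsum hl in
lemma PairPositive.trans {a b c : X} (hab : PairPositive p a b) (hbc : PairPositive p b c) :
    PairPositive p a c := by
  have hb : b ∈ supp p {a, b, c} :=
    mem_supp_of_forall_pairPositive hpos hsum hl (by simp) fun x hx => by
      simp only [mem_insert, mem_singleton] at hx
      rcases hx with rfl | rfl | rfl
      exacts [hab, pairPositive_refl hsum x, hbc.symm]
  have ha := (pairPositive_iff_mem_supp hpos hl hb (by simp)).mp hab.symm
  exact (pairPositive_iff_mem_supp hpos hl ha (by simp)).mpr
    ((pairPositive_iff_mem_supp hpos hl hb (by simp)).mp hbc)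

include hpos hsum hl in
lemma equivalence_pairPositive : Equivalence (PairPositive p) :=
  ⟨pairPositive_refl hsum, PairPositive.symm, PairPositive.trans hpos hsum hl⟩

end ChoiceAxiom

noncomputable def classRep (p : Finset X → X → ℝ) (a : X) : X :=
  @Classical.epsilon X ⟨a⟩ (PairPositive p a)

noncomputable def luceWeight (p : Finset X → X → ℝ) (a : X) : ℝ :=
  p {classRep p a, a} a / p {classRep p a, a} (classRep p a)

section Weights

variable {p : Finset X → X → ℝ} (hp : Equivalence (PairPositive p))
include hp

lemma pairPositive_classRep (a : X) : PairPositive p a (classRep p a) :=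
  @Classical.epsilon_spec X (PairPositive p a) ⟨a, hp.refl a⟩

lemma classRep_eq {a b : X} (hab : PairPositive p a b) : classRep p a = classRep p b := by
  have h : PairPositive p a = PairPositive p b :=
    funext fun x => propext ⟨hp.trans (hp.symm hab), hp.trans hab⟩
  simp only [classRep, h]

lemma luceWeight_pos (a : X) : 0 < luceWeight p a :=
  have h := (pairPositive_classRep hp a).symm
  div_pos h.2 h.1

end Weights

section LuceWeight

variable {p : Finset X → X → ℝ} (hpos : ∀ A a, 0 ≤ p A a)
  (hsum : ∀ A : Finset X, A.Nonempty → ∑ a ∈ A, p A a = 1) (hl : ChoiceAxiom p)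
include hpos hsum hl

lemma luceWeight_eq_div {T : Finset X} {a : X} (ha : a ∈ T) (hc : classRep p a ∈ supp p T) :
    luceWeight p a = p T a / p T (classRep p a) := by
  have hc' := (pairPositive_classRep (equivalence_pairPositive hpos hsum hl) a).symm.1
  rw [luceWeight, div_eq_div_iff hc'.ne' (mem_supp.mp hc).2.ne']
  exact (hl.mul_eq_mul (mem_insert_of_mem (mem_singleton_self a)) (mem_insert_self _ _)
    ha (supp_subset p T hc)).trans (mul_comm _ _)

lemma luceWeight_mul_eq {A : Finset X} {a b : X} (ha : a ∈ supp p A) (hb : b ∈ supp p A) :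
    luceWeight p a * p A b = luceWeight p b * p A a := by
  have hp := equivalence_pairPositive hpos hsum hl
  have hab := (pairPositive_iff_mem_supp hpos hl ha (supp_subset p A hb)).mpr hb
  set c := classRep p a with hc
  have hcb : classRep p b = c := (classRep_eq hp hab).symm
  have hcT : c ∈ supp p {a, b, c} :=
    mem_supp_of_forall_pairPositive hpos hsum hl (by simp) fun x hx => by
      simp only [mem_insert, mem_singleton] at hx
      rcases hx with rfl | rfl | rfl
      exacts [pairPositive_classRep hp _, hcb ▸ pairPositive_classRep hp _, hp.refl _]
  rw [luceWeight_eq_div hpos hsum hl (by simp) hcT,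
    luceWeight_eq_div hpos hsum hl (by simp) (hcb ▸ hcT), hcb,
    div_mul_eq_mul_div, div_mul_eq_mul_div,
    hl.mul_eq_mul (by simp) (by simp) (supp_subset p A ha) (supp_subset p A hb)]

lemma isLuceForm_luceWeight_supp : IsLuceForm p (luceWeight p) (supp p) := by
  have hp := equivalence_pairPositive hpos hsum hl
  intro A hA a haA
  split_ifs with ha
  · rw [eq_div_iff (sum_pos (fun b _ => luceWeight_pos hp b) (supp_nonempty hpos hsum hA)).ne',
      mul_sum]
    conv_rhs => rw [← mul_one (luceWeight p a), ← hsum A hA, ← sum_supp hpos, mul_sum]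
    exact sum_congr rfl fun b hb => (mul_comm _ _).trans (luceWeight_mul_eq hpos hsum hl hb ha)
  · exact le_antisymm (not_lt.mp fun h => ha (mem_supp.mpr ⟨haA, h⟩)) (hpos A a)

end LuceWeight

end RandomChoice

open RandomChoice in
theorem choice_axiom_iff_luce_form_general
    {X : Type*} [DecidableEq X] (p : Finset X → X → ℝ)
    (hpos : ∀ A a, 0 ≤ p A a)
    (hsum : ∀ A : Finset X, A.Nonempty → ∑ a ∈ A, p A a = 1) :
    ((∀ A B : Finset X, B.Nonempty → B ⊆ A → ∀ a ∈ B,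
        p A a = p B a * ∑ b ∈ B, p A b) ↔
      (∃ (v : X → ℝ) (Γ : Finset X → Finset X),
        (∀ x, 0 < v x) ∧
        (∀ A : Finset X, A.Nonempty → Γ A ⊆ A ∧ (Γ A).Nonempty) ∧
        (∀ A B : Finset X, B.Nonempty → B ⊆ A →
          (Γ A ∩ B).Nonempty → Γ B = Γ A ∩ B) ∧
        (∀ A : Finset X, A.Nonempty → ∀ a ∈ A,
          p A a = if a ∈ Γ A then v a / ∑ b ∈ Γ A, v b else 0))) ∧
    (∀ (v : X → ℝ) (Γ : Finset X → Finset X),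
      (∀ x, 0 < v x) →
      (∀ A : Finset X, A.Nonempty → Γ A ⊆ A ∧ (Γ A).Nonempty) →
      (∀ A B : Finset X, B.Nonempty → B ⊆ A →
        (Γ A ∩ B).Nonempty → Γ B = Γ A ∩ B) →
      (∀ A : Finset X, A.Nonempty → ∀ a ∈ A,
        p A a = if a ∈ Γ A then v a / ∑ b ∈ Γ A, v b else 0) →
      ∀ A : Finset X, A.Nonempty → Γ A = A.filter (fun a => 0 < p A a)) := by
  refine ⟨⟨fun hl => ?_, fun ⟨v, Γ, hv, hΓ, hW, hrep⟩ => IsLuceForm.choiceAxiom hv hΓ hrep hW⟩,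
    fun v Γ hv hΓ _ hrep A hA => IsLuceForm.eq_supp hv hΓ hrep hA⟩
  exact ⟨luceWeight p, supp p, luceWeight_pos (equivalence_pairPositive hpos hsum hl),
    isChoiceCorrespondence_supp hpos hsum, satisfiesWARP_supp hpos hl,
    isLuceForm_luceWeight_supp hpos hsum hl⟩

/-- A random choice rule `p` satisfies Luce's Choice Axiom iff there exist
`v : X → (0,∞)` and a choice correspondence `Γ` satisfying WARP such that
`p(a,A) = v(a)/Σ_{b∈Γ(A)} v(b)` if `a ∈ Γ(A)` and `0` otherwise; in this case `Γ` is
unique and equals the support correspondence of `p`. -/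
theorem choice_axiom_iff_luce_form
    {X : Type*} [DecidableEq X] (p : Finset X → X → ℝ)
    (hpos : ∀ A a, 0 ≤ p A a)
    (hout : ∀ A a, a ∉ A → p A a = 0)
    (hsum : ∀ A : Finset X, A.Nonempty → ∑ a ∈ A, p A a = 1) :
    ((∀ A B : Finset X, B.Nonempty → B ⊆ A → ∀ a ∈ B,
        p A a = p B a * ∑ b ∈ B, p A b) ↔
      (∃ (v : X → ℝ) (Γ : Finset X → Finset X),
        (∀ x, 0 < v x) ∧
        (∀ A : Finset X, A.Nonempty → Γ A ⊆ A ∧ (Γ A).Nonempty) ∧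
        (∀ A B : Finset X, B.Nonempty → B ⊆ A →
          (Γ A ∩ B).Nonempty → Γ B = Γ A ∩ B) ∧
        (∀ A : Finset X, A.Nonempty → ∀ a ∈ A,
          p A a = if a ∈ Γ A then v a / ∑ b ∈ Γ A, v b else 0))) ∧
    (∀ (v : X → ℝ) (Γ : Finset X → Finset X),
      (∀ x, 0 < v x) →
      (∀ A : Finset X, A.Nonempty → Γ A ⊆ A ∧ (Γ A).Nonempty) →
      (∀ A B : Finset X, B.Nonempty → B ⊆ A →
        (Γ A ∩ B).Nonempty → Γ B = Γ A ∩ B) →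
      (∀ A : Finset X, A.Nonempty → ∀ a ∈ A,
        p A a = if a ∈ Γ A then v a / ∑ b ∈ Γ A, v b else 0) →
      ∀ A : Finset X, A.Nonempty → Γ A = A.filter (fun a => 0 < p A a)) :=
  choice_axiom_iff_luce_form_general p hpos hsum
end

section
/- A random choice rule p satisfies Luce's Choice Axiom if and only if its support correspondence satisfies WARP and the Renyi conditioning identity p_B(a) = p_A(a)/p_A(B) holds for all B ⊆ A in 𝒜 and all a ∈ B ∩ supp p_A. -/
/-!
Under the Choice Axiom `p_A(a) = p_B(a) · p_A(B)`, the factor `p_A(B)` is positive exactly when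
`B` meets the support of `p_A`; in that case `p_A` and `p_B` have the same positivity pattern on `B`
(WARP) and dividing by `p_A(B)` is Rényi conditioning. Conversely, when `p_A(B) = 0` the Choice
Axiom holds trivially, and when `p_A(B) > 0` conditioning gives it on `supp p_A ∩ B`, while WARP
forces `p_B(a) = 0 = p_A(a)` on the rest of `B`.
-/

open Finset

namespace RandomChoice

variable {X : Type*}

noncomputable def support (p : Finset X → X → ℝ) (A : Finset X) : Finset X :=
  A.filter (fun a => 0 < p A a)

def LuceChoiceAxiom (p : Finset X → X → ℝ) : Prop :=
  ∀ A B : Finset X, B.Nonempty → B ⊆ A → ∀ a ∈ B, p A a = p B a * ∑ b ∈ B, p A b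

def SupportWARP [DecidableEq X] (p : Finset X → X → ℝ) : Prop :=
  ∀ A B : Finset X, B.Nonempty → B ⊆ A → (support p A ∩ B).Nonempty →
    support p B = support p A ∩ B

def RenyiConditioning (p : Finset X → X → ℝ) : Prop :=
  ∀ A B : Finset X, B.Nonempty → B ⊆ A → ∀ a ∈ B, 0 < p A a →
    p B a = p A a / ∑ b ∈ B, p A b

variable {p : Finset X → X → ℝ} {A B : Finset X}

lemma support_inter_of_subset [DecidableEq X] (hBA : B ⊆ A) :
    support p A ∩ B = B.filter (fun a => 0 < p A a) := by
  rw [support, filter_inter, inter_eq_right.mpr hBA]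

lemma mem_support_iff {a : X} : a ∈ support p A ↔ a ∈ A ∧ 0 < p A a :=
  mem_filter

lemma support_inter_nonempty_iff_sum_pos [DecidableEq X] (hpos : ∀ b ∈ B, 0 ≤ p A b)
    (hBA : B ⊆ A) : (support p A ∩ B).Nonempty ↔ 0 < ∑ b ∈ B, p A b := by
  rw [support_inter_of_subset hBA, filter_nonempty_iff, sum_pos_iff_of_nonneg hpos]

lemma filter_pos_eq_of_eq_mul {s : Finset X} {f g : X → ℝ} {c : ℝ} (hc : 0 < c)
    (h : ∀ a ∈ s, f a = g a * c) :
    s.filter (fun a => 0 < g a) = s.filter (fun a => 0 < f a) :=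
  filter_congr fun a ha => by rw [h a ha, mul_pos_iff_of_pos_right hc]

lemma LuceChoiceAxiom.supportWARP [DecidableEq X] (hpos : ∀ A a, 0 ≤ p A a)
    (hL : LuceChoiceAxiom p) : SupportWARP p := by
  intro A B hB hBA hmeet
  have hsum := (support_inter_nonempty_iff_sum_pos (fun b _ => hpos A b) hBA).mp hmeet
  rw [support_inter_of_subset hBA, support, filter_pos_eq_of_eq_mul hsum (hL A B hB hBA)]

lemma LuceChoiceAxiom.renyiConditioning (hpos : ∀ A a, 0 ≤ p A a) (hL : LuceChoiceAxiom p) :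
    RenyiConditioning p := by
  intro A B hB hBA a ha hpa
  have hsum : 0 < ∑ b ∈ B, p A b :=
    (sum_pos_iff_of_nonneg fun b _ => hpos A b).mpr ⟨a, ha, hpa⟩
  exact eq_div_of_mul_eq hsum.ne' (hL A B hB hBA a ha).symm

lemma eq_zero_of_supportWARP [DecidableEq X] (hW : SupportWARP p)
    (hB : B.Nonempty) (hBA : B ⊆ A) (hmeet : (support p A ∩ B).Nonempty)
    {a : X} (ha : a ∈ B) (hpB : 0 ≤ p B a) (hpa : p A a = 0) : p B a = 0 := by
  have ha' : a ∉ support p B := by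
    rw [hW A B hB hBA hmeet, mem_inter, mem_support_iff]
    exact fun h => h.1.2.ne' hpa
  rw [mem_support_iff, not_and, not_lt] at ha'
  exact (ha' ha).antisymm hpB

lemma luceChoiceAxiom_of_supportWARP_of_renyiConditioning [DecidableEq X]
    (hpos : ∀ A a, 0 ≤ p A a) (hW : SupportWARP p) (hC : RenyiConditioning p) :
    LuceChoiceAxiom p := by
  intro A B hB hBA a ha
  rcases (sum_nonneg fun b _ => hpos A b : 0 ≤ ∑ b ∈ B, p A b).eq_or_lt with hsum | hsum
  · rw [← hsum, mul_zero]
    exact (sum_eq_zero_iff_of_nonneg (fun b _ => hpos A b)).mp hsum.symm a ha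
  rcases (hpos A a).eq_or_lt with hpa | hpa
  · have hmeet := (support_inter_nonempty_iff_sum_pos (fun b _ => hpos A b) hBA).mpr hsum
    rw [← hpa, eq_zero_of_supportWARP hW hB hBA hmeet ha (hpos B a) hpa.symm, zero_mul]
  · rw [hC A B hB hBA a ha hpa, div_mul_cancel₀ _ hsum.ne']

end RandomChoice

open RandomChoice in
theorem choice_axiom_iff_warp_and_conditioning_general
    {X : Type*} [DecidableEq X] (p : Finset X → X → ℝ)
    (hpos : ∀ A a, 0 ≤ p A a) :
    (∀ A B : Finset X, B.Nonempty → B ⊆ A → ∀ a ∈ B,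
      p A a = p B a * ∑ b ∈ B, p A b) ↔
    ((∀ A B : Finset X, B.Nonempty → B ⊆ A →
        (A.filter (fun a => 0 < p A a) ∩ B).Nonempty →
        B.filter (fun a => 0 < p B a) = A.filter (fun a => 0 < p A a) ∩ B) ∧
      (∀ A B : Finset X, B.Nonempty → B ⊆ A → ∀ a ∈ B, 0 < p A a →
        p B a = p A a / ∑ b ∈ B, p A b)) :=
  ⟨fun hL => ⟨LuceChoiceAxiom.supportWARP hpos hL, LuceChoiceAxiom.renyiConditioning hpos hL⟩,
    fun ⟨hW, hC⟩ => luceChoiceAxiom_of_supportWARP_of_renyiConditioning hpos hW hC⟩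

/-- A random choice rule `p` satisfies Luce's Choice Axiom iff its support
correspondence satisfies WARP and the Renyi conditioning identity
`p_B(a) = p_A(a)/p_A(B)` holds for all `B ⊆ A` and `a ∈ B ∩ supp p_A`. -/
theorem choice_axiom_iff_warp_and_conditioning
    {X : Type*} [DecidableEq X] (p : Finset X → X → ℝ)
    (hpos : ∀ A a, 0 ≤ p A a)
    (hout : ∀ A a, a ∉ A → p A a = 0)
    (hsum : ∀ A : Finset X, A.Nonempty → ∑ a ∈ A, p A a = 1) :
    (∀ A B : Finset X, B.Nonempty → B ⊆ A → ∀ a ∈ B,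
      p A a = p B a * ∑ b ∈ B, p A b) ↔
    ((∀ A B : Finset X, B.Nonempty → B ⊆ A →
        (A.filter (fun a => 0 < p A a) ∩ B).Nonempty →
        B.filter (fun a => 0 < p B a) = A.filter (fun a => 0 < p A a) ∩ B) ∧
      (∀ A B : Finset X, B.Nonempty → B ⊆ A → ∀ a ∈ B, 0 < p A a →
        p B a = p A a / ∑ b ∈ B, p A b)) :=
  choice_axiom_iff_warp_and_conditioning_general p hpos
end

section
/- Let p be a random choice rule satisfying Luce's Choice Axiom, with support correspondence Γ(A) = supp p_A. Then the relation a ≿ b defined by p(a,{a,b}) > 0 is complete and transitive, and Γ(A) = {a ∈ A : a ≿ b for all b ∈ A} for every A ∈ 𝒜. -/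
/-!
By Luce's axiom applied to the pair `{a, b} ⊆ A`, `p(a, A)` is `p(a, {a, b})` times the mass
that `p_A` gives to `{a, b}`. Hence an element chosen with positive probability from `A` beats
every other element of `A` in pairwise choice, and conversely anything that beats a chosen
element is itself chosen. Transitivity follows by applying this to `A = {a, b, c}`, whose
support is nonempty: wherever the support meets `A`, it propagates back along `c → b → a`.
-/

namespace LuceChoice

theorem exists_pos_of_sum_eq_one {ι : Type*} {s : Finset ι} {f : ι → ℝ}
    (hsum : ∑ i ∈ s, f i = 1) : ∃ i ∈ s, 0 < f i :=
  Finset.exists_lt_of_sum_lt (f := 0) (by simp [hsum])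

variable {X : Type*} [DecidableEq X] {p : Finset X → X → ℝ}

def ChoiceAxiom (p : Finset X → X → ℝ) : Prop :=
  ∀ A B : Finset X, B.Nonempty → B ⊆ A → ∀ a ∈ B, p A a = p B a * ∑ b ∈ B, p A b

theorem eq_pair_mul_sum_pair (hCA : ChoiceAxiom p) {A : Finset X} {a b : X}
    (ha : a ∈ A) (hb : b ∈ A) :
    p A a = p {a, b} a * ∑ x ∈ ({a, b} : Finset X), p A x :=
  hCA A {a, b} (Finset.insert_nonempty a {b}) (Finset.insert_subset ha (by simpa using hb)) a
    (Finset.mem_insert_self a {b})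

theorem pos_pair_of_pos (hpos : ∀ A a, 0 ≤ p A a) (hCA : ChoiceAxiom p)
    {A : Finset X} {a b : X} (ha : a ∈ A) (hb : b ∈ A) (hpa : 0 < p A a) :
    0 < p {a, b} a := by
  rw [eq_pair_mul_sum_pair hCA ha hb] at hpa
  exact pos_of_mul_pos_left hpa (Finset.sum_nonneg fun x _ => hpos A x)

theorem pos_of_pos_pair_of_pos (hpos : ∀ A a, 0 ≤ p A a) (hCA : ChoiceAxiom p)
    {A : Finset X} {a b : X} (ha : a ∈ A) (hb : b ∈ A) (hab : 0 < p {a, b} a)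
    (hpb : 0 < p A b) :
    0 < p A a := by
  have hmass : p A b ≤ ∑ x ∈ ({a, b} : Finset X), p A x :=
    Finset.single_le_sum (fun x _ => hpos A x) (by simp)
  rw [eq_pair_mul_sum_pair hCA ha hb]
  exact mul_pos hab (hpb.trans_le hmass)

theorem pos_pair_or_pos_pair (hsum : ∀ A : Finset X, A.Nonempty → ∑ a ∈ A, p A a = 1)
    (a b : X) : 0 < p {a, b} a ∨ 0 < p {a, b} b := by
  obtain ⟨x, hx, hpx⟩ := exists_pos_of_sum_eq_one (hsum {a, b} (Finset.insert_nonempty a {b}))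
  rcases Finset.mem_insert.mp hx with rfl | hx
  · exact Or.inl hpx
  · rw [Finset.mem_singleton.mp hx] at hpx
    exact Or.inr hpx

theorem pos_pair_trans (hpos : ∀ A a, 0 ≤ p A a)
    (hsum : ∀ A : Finset X, A.Nonempty → ∑ a ∈ A, p A a = 1)
    (hCA : ChoiceAxiom p)
    {a b c : X} (hab : 0 < p {a, b} a) (hbc : 0 < p {b, c} b) :
    0 < p {a, c} a := by
  set A : Finset X := {a, b, c}
  have ha : a ∈ A := by simp [A]
  have hb : b ∈ A := by simp [A]
  have hc : c ∈ A := by simp [A]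
  have hb_of_hc : 0 < p A c → 0 < p A b := pos_of_pos_pair_of_pos hpos hCA hb hc hbc
  have ha_of_hb : 0 < p A b → 0 < p A a := pos_of_pos_pair_of_pos hpos hCA ha hb hab
  obtain ⟨x, hx, hpx⟩ := exists_pos_of_sum_eq_one (hsum A ⟨a, ha⟩)
  have hpa : 0 < p A a := by
    simp only [A, Finset.mem_insert, Finset.mem_singleton] at hx
    rcases hx with rfl | rfl | rfl
    exacts [hpx, ha_of_hb hpx, ha_of_hb (hb_of_hc hpx)]
  exact pos_pair_of_pos hpos hCA ha hc hpa

theorem pos_iff_forall_pos_pair (hpos : ∀ A a, 0 ≤ p A a)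
    (hsum : ∀ A : Finset X, A.Nonempty → ∑ a ∈ A, p A a = 1)
    (hCA : ChoiceAxiom p)
    {A : Finset X} {a : X} (ha : a ∈ A) :
    0 < p A a ↔ ∀ b ∈ A, 0 < p {a, b} a := by
  refine ⟨fun hpa b hb => pos_pair_of_pos hpos hCA ha hb hpa, fun hmax => ?_⟩
  obtain ⟨b, hb, hpb⟩ := exists_pos_of_sum_eq_one (hsum A ⟨a, ha⟩)
  exact pos_of_pos_pair_of_pos hpos hCA ha hb (hmax b hb) hpb

end LuceChoice

theorem support_is_argmax_of_revealed_preference_general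
    {X : Type*} [DecidableEq X] (p : Finset X → X → ℝ)
    (hpos : ∀ A a, 0 ≤ p A a)
    (hsum : ∀ A : Finset X, A.Nonempty → ∑ a ∈ A, p A a = 1)
    (hCA : ∀ A B : Finset X, B.Nonempty → B ⊆ A → ∀ a ∈ B,
      p A a = p B a * ∑ b ∈ B, p A b) :
    (∀ a b : X, 0 < p {a, b} a ∨ 0 < p {a, b} b) ∧
    (∀ a b c : X, 0 < p {a, b} a → 0 < p {b, c} b → 0 < p {a, c} a) ∧
    (∀ A : Finset X, A.Nonempty →
      A.filter (fun a => 0 < p A a) = A.filter (fun a => ∀ b ∈ A, 0 < p {a, b} a)) :=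
  ⟨LuceChoice.pos_pair_or_pos_pair hsum,
    fun _ _ _ => LuceChoice.pos_pair_trans hpos hsum hCA,
    fun _ _ => Finset.filter_congr fun _ ha =>
      LuceChoice.pos_iff_forall_pos_pair hpos hsum hCA ha⟩

/-- Under Luce's Choice Axiom, the revealed relation `a ≿ b ↔ p(a,{a,b}) > 0` is
complete and transitive, and the support of `p_A` is exactly the set of
`≿`-maximal elements of `A`. -/
theorem support_is_argmax_of_revealed_preference
    {X : Type*} [DecidableEq X] (p : Finset X → X → ℝ)
    (hpos : ∀ A a, 0 ≤ p A a)
    (hout : ∀ A a, a ∉ A → p A a = 0)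
    (hsum : ∀ A : Finset X, A.Nonempty → ∑ a ∈ A, p A a = 1)
    (hCA : ∀ A B : Finset X, B.Nonempty → B ⊆ A → ∀ a ∈ B,
      p A a = p B a * ∑ b ∈ B, p A b) :
    (∀ a b : X, 0 < p {a, b} a ∨ 0 < p {a, b} b) ∧
    (∀ a b c : X, 0 < p {a, b} a → 0 < p {b, c} b → 0 < p {a, c} a) ∧
    (∀ A : Finset X, A.Nonempty →
      A.filter (fun a => 0 < p A a) = A.filter (fun a => ∀ b ∈ A, 0 < p {a, b} a)) :=
  support_is_argmax_of_revealed_preference_general p hpos hsum hCA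
end

section
/- Let Γ be a choice correspondence on the finite subsets of X satisfying WARP. Then the relation ≿ defined by a ≿ b iff a ∈ Γ({a,b}) is complete and transitive, and Γ(A) = {a ∈ A : a ≿ b for all b ∈ A} for all nonempty finite A. -/
/-! Restricting the menu to a two-element set `{a, b}` inside `A` shows that every choice from `A`
is revealed preferred to everything in `A`; conversely, an element revealed preferred to something
chosen from `A` must itself be chosen, by WARP applied to the same pair. Transitivity is the same
argument on the menu `{a, b, c}`, where the chosen element is pulled back along `c → b → a`. -/

open Finset

section

variable {X : Type*}

theorem exists_mem_choice {Γ : Finset X → Finset X}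
    (hΓsub : ∀ A : Finset X, A.Nonempty → Γ A ⊆ A)
    (hΓne : ∀ A : Finset X, A.Nonempty → (Γ A).Nonempty) {A : Finset X} (hA : A.Nonempty) :
    ∃ x ∈ A, x ∈ Γ A :=
  (hΓne A hA).imp fun _ hx => ⟨hΓsub A hA hx, hx⟩

theorem mem_choice_pair_or_mem_choice_pair [DecidableEq X] {Γ : Finset X → Finset X}
    (hΓsub : ∀ A : Finset X, A.Nonempty → Γ A ⊆ A)
    (hΓne : ∀ A : Finset X, A.Nonempty → (Γ A).Nonempty) (a b : X) :
    a ∈ Γ {a, b} ∨ b ∈ Γ {a, b} := by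
  obtain ⟨x, hx, hxΓ⟩ := exists_mem_choice hΓsub hΓne (insert_nonempty a {b})
  rcases mem_insert.1 hx with rfl | hx
  · exact .inl hxΓ
  · exact .inr (mem_singleton.1 hx ▸ hxΓ)

variable [DecidableEq X]

def WARP (Γ : Finset X → Finset X) : Prop :=
  ∀ A B : Finset X, B.Nonempty → B ⊆ A → (Γ A ∩ B).Nonempty → Γ B = Γ A ∩ B

namespace WARP

variable {Γ : Finset X → Finset X} {A B : Finset X} {a b : X}

theorem choice_eq_inter (h : WARP Γ) (hBA : B ⊆ A) (hb : b ∈ Γ A) (hbB : b ∈ B) :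
    Γ B = Γ A ∩ B :=
  h A B ⟨b, hbB⟩ hBA ⟨b, mem_inter.2 ⟨hb, hbB⟩⟩

theorem mem_choice_of_subset (h : WARP Γ) (hBA : B ⊆ A) (ha : a ∈ Γ A) (haB : a ∈ B) :
    a ∈ Γ B := by
  rw [h.choice_eq_inter hBA ha haB]
  exact mem_inter.2 ⟨ha, haB⟩

theorem mem_choice_of_mem_choice_subset (h : WARP Γ) (hBA : B ⊆ A) (hb : b ∈ Γ A) (hbB : b ∈ B)
    (ha : a ∈ Γ B) : a ∈ Γ A := by
  rw [h.choice_eq_inter hBA hb hbB] at ha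
  exact (mem_inter.1 ha).1

theorem mem_choice_pair (h : WARP Γ) (ha : a ∈ Γ A) (haA : a ∈ A) (hbA : b ∈ A) : a ∈ Γ {a, b} :=
  h.mem_choice_of_subset (insert_subset haA (singleton_subset_iff.2 hbA)) ha (mem_insert_self _ _)

theorem mem_choice_of_mem_choice_pair (h : WARP Γ) (hb : b ∈ Γ A) (haA : a ∈ A) (hbA : b ∈ A)
    (hab : a ∈ Γ {a, b}) : a ∈ Γ A :=
  h.mem_choice_of_mem_choice_subset (insert_subset haA (singleton_subset_iff.2 hbA)) hb
    (mem_insert_of_mem (mem_singleton_self _)) hab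

theorem mem_choice_pair_trans (h : WARP Γ)
    (hΓsub : ∀ A : Finset X, A.Nonempty → Γ A ⊆ A)
    (hΓne : ∀ A : Finset X, A.Nonempty → (Γ A).Nonempty) {c : X}
    (hab : a ∈ Γ {a, b}) (hbc : b ∈ Γ {b, c}) : a ∈ Γ {a, c} := by
  have haA : a ∈ ({a, b, c} : Finset X) := by simp
  have hbA : b ∈ ({a, b, c} : Finset X) := by simp
  have hcA : c ∈ ({a, b, c} : Finset X) := by simp
  have hb_to_a := fun hb => h.mem_choice_of_mem_choice_pair hb haA hbA hab
  have hc_to_b := fun hc => h.mem_choice_of_mem_choice_pair hc hbA hcA hbc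
  obtain ⟨x, hx, hxΓ⟩ := exists_mem_choice hΓsub hΓne ⟨a, haA⟩
  have ha : a ∈ Γ {a, b, c} := by
    simp only [mem_insert, mem_singleton] at hx
    rcases hx with rfl | rfl | rfl
    exacts [hxΓ, hb_to_a hxΓ, hb_to_a (hc_to_b hxΓ)]
  exact h.mem_choice_pair ha haA hcA

theorem choice_eq_filter_mem_choice_pair (h : WARP Γ)
    (hΓsub : ∀ A : Finset X, A.Nonempty → Γ A ⊆ A)
    (hΓne : ∀ A : Finset X, A.Nonempty → (Γ A).Nonempty) (hA : A.Nonempty) :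
    Γ A = A.filter (fun a => ∀ b ∈ A, a ∈ Γ {a, b}) := by
  ext a
  rw [mem_filter]
  refine ⟨fun ha => ⟨hΓsub A hA ha, fun b hb => h.mem_choice_pair ha (hΓsub A hA ha) hb⟩, ?_⟩
  rintro ⟨haA, hbest⟩
  obtain ⟨c, hc, hcΓ⟩ := exists_mem_choice hΓsub hΓne hA
  exact h.mem_choice_of_mem_choice_pair hcΓ haA hc (hbest c hc)

end WARP

end

/-- If a choice correspondence `Γ` satisfies WARP, then the revealed relation
`a ≿ b ↔ a ∈ Γ {a,b}` is complete and transitive, and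
`Γ(A) = {a ∈ A : a ≿ b for all b ∈ A}`. -/
theorem warp_implies_rationalizable
    {X : Type*} [DecidableEq X] (Γ : Finset X → Finset X)
    (hΓsub : ∀ A : Finset X, A.Nonempty → Γ A ⊆ A)
    (hΓne : ∀ A : Finset X, A.Nonempty → (Γ A).Nonempty)
    (hWARP : ∀ A B : Finset X, B.Nonempty → B ⊆ A →
      (Γ A ∩ B).Nonempty → Γ B = Γ A ∩ B) :
    (∀ a b : X, a ∈ Γ {a, b} ∨ b ∈ Γ {a, b}) ∧
    (∀ a b c : X, a ∈ Γ {a, b} → b ∈ Γ {b, c} → a ∈ Γ {a, c}) ∧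
    (∀ A : Finset X, A.Nonempty →
      Γ A = A.filter (fun a => ∀ b ∈ A, a ∈ Γ {a, b})) := by
  have h : WARP Γ := hWARP
  exact ⟨mem_choice_pair_or_mem_choice_pair hΓsub hΓne,
    fun _ _ _ => h.mem_choice_pair_trans hΓsub hΓne,
    fun _ => h.choice_eq_filter_mem_choice_pair hΓsub hΓne⟩
end

section
/- Let X be a separable metric space and let p be a random choice rule satisfying Luce's Choice Axiom, with induced weak preference a ≿ b iff p(a,{a,b}) > 0. Then p satisfies Continuity (if x_n → x and p(x_n,{x_n,y}) > 0 for all n then p(x,{x,y}) > 0, and if p(y,{y,x_n}) > 0 for all n then p(y,{y,x}) > 0) if and only if there exists a continuous u : X → ℝ such that supp p_A = argmax_{a∈A} u(a) for all finite nonempty A. -/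
/-!
Luce's axiom makes `a ≿ b :↔ 0 < p {a, b} a` a total preorder and identifies the support of `p_A`
with the `≿`-maximal elements of `A`; Continuity says exactly that the sections of `≿` are closed.
So the theorem is Debreu's, which we prove on the linearly ordered quotient `Y` of `X` with its
order topology. Between `a < b` in `Y` there is a monotone continuous step from `0` to `1`: the
running supremum of an Urysohn function. Countably many such steps, between pairs of a countable
dense set and across the gaps of `Y` (countably many, since each is detected by a basic open set
of `X`), separate the points of `Y`, and `∑ 2⁻ⁿ gₙ` is a continuous strictly monotone utility.
-/
open scoped Classical
open Set Filter Topology TopologicalSpace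

theorem exists_continuous_strictMono_of_separating {ι Y : Type*} [Countable ι]
    [TopologicalSpace Y] [Preorder Y] (g : ι → Y → ℝ) (hcont : ∀ i, Continuous (g i))
    (hmono : ∀ i, Monotone (g i)) (hmem : ∀ i y, g i y ∈ Icc (0 : ℝ) 1)
    (hsep : ∀ x y, x < y → ∃ i, g i x < g i y) :
    ∃ u : Y → ℝ, Continuous u ∧ StrictMono u := by
  obtain ⟨e, he⟩ := exists_injective_nat ι
  set w : ι → ℝ := fun i => (1 / 2) ^ e i
  have hw : Summable w := summable_geometric_two.comp_injective he
  have hw0 : ∀ i, 0 < w i := fun i => by positivity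
  have hbound : ∀ i y, ‖w i * g i y‖ ≤ w i := fun i y => by
    rw [norm_mul, Real.norm_of_nonneg (hw0 i).le, Real.norm_of_nonneg (hmem i y).1]
    exact mul_le_of_le_one_right (hw0 i).le (hmem i y).2
  have hsum : ∀ y, Summable fun i => w i * g i y := fun y => hw.of_norm_bounded (hbound · y)
  refine ⟨fun y => ∑' i, w i * g i y, continuous_tsum (fun i => continuous_const.mul (hcont i))
    hw hbound, fun x y hxy => ?_⟩
  obtain ⟨i, hi⟩ := hsep x y hxy
  exact Summable.tsum_lt_tsum (fun j => mul_le_mul_of_nonneg_left (hmono j hxy.le) (hw0 j).le)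
    (mul_lt_mul_of_pos_left hi (hw0 i)) (hsum x) (hsum y)

section OrderTopology

variable {Y : Type*} [LinearOrder Y] [TopologicalSpace Y] [OrderTopology Y]

theorem Continuous.sSup_image_Iic {f : Y → ℝ} (hf : Continuous f) (hbdd : BddAbove (range f)) :
    Continuous fun y => sSup (f '' Iic y) := by
  set F := fun y => sSup (f '' Iic y)
  have le_F : ∀ {y z}, z ≤ y → f z ≤ F y := fun hz =>
    le_csSup (hbdd.mono (image_subset_range f _)) ⟨_, hz, rfl⟩
  refine OrderTopology.continuous_iff.2 fun c => ⟨?_, ?_⟩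
  · refine isOpen_iff_mem_nhds.2 fun y (hy : c < F y) => ?_
    obtain ⟨_, ⟨z, hzy, rfl⟩, hcz⟩ := exists_lt_of_lt_csSup (nonempty_Iic.image f) hy
    rcases hzy.lt_or_eq with hzy | rfl
    · filter_upwards [Ioi_mem_nhds hzy] with y' hy' using hcz.trans_le (le_F hy'.le)
    · filter_upwards [hf.continuousAt.eventually (Ioi_mem_nhds hcz)] with y' hy'
        using lt_of_lt_of_le hy' (le_F le_rfl)
  · refine isOpen_iff_mem_nhds.2 fun y (hy : F y < c) => ?_
    obtain ⟨c', hFc', hc'c⟩ := exists_between hy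
    -- to the left of `y` the supremum can only drop; to the right `f` stays below `c'` for a while
    have hF_lt : ∀ y', (∀ z ∈ Ioc y y', f z < c') → F y' < c := fun y' h =>
      (csSup_le (nonempty_Iic.image f) (by
        rintro _ ⟨z, hz, rfl⟩
        rcases le_or_gt z y with hzy | hyz
        · exact (le_F hzy).trans hFc'.le
        · exact (h z ⟨hyz, hz⟩).le)).trans_lt hc'c
    have hf_near : {z | f z < c'} ∈ 𝓝 y :=
      hf.continuousAt.eventually (Iio_mem_nhds ((le_F le_rfl).trans_lt hFc'))
    by_cases htop : ∃ l, y < l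
    · obtain ⟨l, hyl, hIco⟩ := exists_Ico_subset_of_mem_nhds hf_near htop
      filter_upwards [Iio_mem_nhds hyl] with y' hy'
      exact hF_lt y' fun z hz => hIco ⟨hz.1.le, hz.2.trans_lt hy'⟩
    · exact univ_mem' fun y' => hF_lt y' fun z hz => absurd ⟨z, hz.1⟩ htop

theorem exists_continuous_monotone_zero_one {a b : Y} (hab : a < b) :
    ∃ g : Y → ℝ, Continuous g ∧ Monotone g ∧ (∀ y, g y ∈ Icc (0 : ℝ) 1) ∧
      EqOn g 0 (Iic a) ∧ EqOn g 1 (Ici b) := by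
  obtain ⟨f, hf0, hf1, hf01⟩ := exists_continuous_zero_one_of_isClosed isClosed_Iic isClosed_Ici
    (Iic_disjoint_Ici.2 hab.not_ge)
  have hbdd : BddAbove (range f) := ⟨1, by rintro _ ⟨y, rfl⟩; exact (hf01 y).2⟩
  set g := fun y => sSup (f '' Iic y)
  have le_g : ∀ {y z}, z ≤ y → f z ≤ g y := fun hz =>
    le_csSup (hbdd.mono (image_subset_range _ _)) ⟨_, hz, rfl⟩
  have g_le : ∀ {y c}, (∀ z ≤ y, f z ≤ c) → g y ≤ c := fun h =>
    csSup_le (nonempty_Iic.image f) (by rintro _ ⟨z, hz, rfl⟩; exact h z hz)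
  refine ⟨g, f.continuous.sSup_image_Iic hbdd, fun y y' h => g_le fun z hz => le_g (hz.trans h),
    fun y => ⟨(hf01 y).1.trans (le_g le_rfl), g_le fun z _ => (hf01 z).2⟩,
    fun y hy => ?_, fun y hy => ?_⟩
  · exact le_antisymm (g_le fun z hz => (hf0 (hz.trans hy)).le) ((hf01 y).1.trans (le_g le_rfl))
  · exact le_antisymm (g_le fun z _ => (hf01 z).2) ((hf1 hy).symm.le.trans (le_g le_rfl))

theorem exists_continuous_strictMono_of_countable_covBy [SeparableSpace Y]
    (hcov : {p : Y × Y | p.1 ⋖ p.2}.Countable) : ∃ u : Y → ℝ, Continuous u ∧ StrictMono u := by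
  obtain ⟨S, hSc, hSd⟩ := exists_countable_dense Y
  set P := {p : Y × Y | p.1 ∈ S ∧ p.2 ∈ S ∧ p.1 < p.2} ∪ {p | p.1 ⋖ p.2}
  have hP : P.Countable := ((hSc.prod hSc).mono fun _ hp => mk_mem_prod hp.1 hp.2.1).union hcov
  have hsep : ∀ x y : Y, x < y → ∃ p ∈ P, x ≤ p.1 ∧ p.2 ≤ y := by
    intro x y hxy
    by_cases hxy' : (Ioo x y).Nonempty
    · obtain ⟨d, hd, hdS⟩ := hSd.inter_open_nonempty _ isOpen_Ioo hxy'
      by_cases hxd : (Ioo x d).Nonempty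
      · obtain ⟨c, hc, hcS⟩ := hSd.inter_open_nonempty _ isOpen_Ioo hxd
        exact ⟨(c, d), Or.inl ⟨hcS, hdS, hc.2⟩, hc.1.le, hd.2.le⟩
      · exact ⟨(x, d), Or.inr (covBy_iff_Ioo_eq.2 ⟨hd.1, not_nonempty_iff_eq_empty.1 hxd⟩),
          le_rfl, hd.2.le⟩
    · exact ⟨(x, y), Or.inr (covBy_iff_Ioo_eq.2 ⟨hxy, not_nonempty_iff_eq_empty.1 hxy'⟩),
        le_rfl, le_rfl⟩
  have : ∀ p : P, ∃ g : Y → ℝ, Continuous g ∧ Monotone g ∧ (∀ y, g y ∈ Icc (0 : ℝ) 1) ∧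
      EqOn g 0 (Iic p.1.1) ∧ EqOn g 1 (Ici p.1.2) := fun p =>
    exists_continuous_monotone_zero_one (p.2.elim (fun h => h.2.2) CovBy.lt)
  choose g hg_cont hg_mono hg_mem hg0 hg1 using this
  have := hP.to_subtype
  refine exists_continuous_strictMono_of_separating g hg_cont hg_mono hg_mem fun x y hxy => ?_
  obtain ⟨p, hp, hxp, hpy⟩ := hsep x y hxy
  exact ⟨⟨p, hp⟩, by simp [hg0 ⟨p, hp⟩ hxp, hg1 ⟨p, hp⟩ hpy]⟩

end OrderTopology

theorem countable_setOf_covBy_of_continuous_surjective {X Y : Type*} [TopologicalSpace X]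
    [SecondCountableTopology X] [LinearOrder Y] [TopologicalSpace Y] [OrderTopology Y]
    {q : X → Y} (hq : Continuous q) (hsurj : Function.Surjective q) :
    {p : Y × Y | p.1 ⋖ p.2}.Countable := by
  -- the upper end of a gap is the least value of `q` on some basic open set
  have hcover : {p : Y × Y | p.1 ⋖ p.2} ⊆
      ⋃ B ∈ countableBasis X, {p : Y × Y | p.1 ⋖ p.2 ∧ IsLeast (q '' B) p.2} := by
    rintro ⟨a, b⟩ (hab : a ⋖ b)
    obtain ⟨x, rfl⟩ := hsurj b
    have hopen : IsOpen (q ⁻¹' Ioi a) := isOpen_Ioi.preimage hq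
    obtain ⟨B, hB, hxB, hBsub⟩ :=
      (isBasis_countableBasis X).exists_subset_of_mem_open (show q x ∈ Ioi a from hab.lt) hopen
    refine mem_biUnion hB ⟨hab, mem_image_of_mem q hxB, ?_⟩
    rintro _ ⟨z, hz, rfl⟩
    exact hab.ge_of_gt (hBsub hz)
  refine (countable_countableBasis X).biUnion (fun B _ => Subsingleton.countable ?_) |>.mono hcover
  rintro ⟨a, b⟩ ⟨hab : a ⋖ b, hb⟩ ⟨a', b'⟩ ⟨ha'b' : a' ⋖ b', hb'⟩
  obtain rfl : b = b' := hb.unique hb'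
  rw [hab.unique_left ha'b']

/-- Debreu's representation theorem. -/
theorem exists_continuous_utility {X : Type*} [TopologicalSpace X] [SecondCountableTopology X]
    [Preorder X] [@Std.Total X (· ≤ ·)] [ClosedIicTopology X] [ClosedIciTopology X] :
    ∃ u : X → ℝ, Continuous u ∧ ∀ x y, x ≤ y ↔ u x ≤ u y := by
  let Y := Antisymmetrization X (· ≤ ·)
  let _ : TopologicalSpace Y := Preorder.topology Y
  have : OrderTopology Y := ⟨rfl⟩
  let q : X → Y := toAntisymmetrization (· ≤ ·)
  have hsurj : Function.Surjective q := Quotient.mk_surjective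
  have hq : Continuous q := by
    refine OrderTopology.continuous_iff.2 fun c => ?_
    induction c using Antisymmetrization.ind with | _ c => ?_
    have hlt : ∀ a b : X, a < b ↔ ¬b ≤ a := fun a b =>
      ⟨fun h => h.not_ge, fun h => lt_of_le_not_ge ((total_of _ a b).resolve_right h) h⟩
    constructor
    · convert (isClosed_Iic (a := c)).isOpen_compl using 1
      ext x
      exact toAntisymmetrization_lt_toAntisymmetrization_iff.trans (hlt c x)
    · convert (isClosed_Ici (a := c)).isOpen_compl using 1
      ext x
      exact toAntisymmetrization_lt_toAntisymmetrization_iff.trans (hlt x c)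
  have := hsurj.denseRange.separableSpace hq
  obtain ⟨u, hu, hmono⟩ := exists_continuous_strictMono_of_countable_covBy
    (countable_setOf_covBy_of_continuous_surjective hq hsurj)
  exact ⟨u ∘ q, hu.comp hq, fun x y =>
    toAntisymmetrization_le_toAntisymmetrization_iff.symm.trans hmono.le_iff_le.symm⟩

theorem forall_isClosed_setOf_iff_forall_tendsto {X : Type*} [TopologicalSpace X]
    [SequentialSpace X] (R : X → X → Prop) :
    (∀ y, IsClosed {x | R x y} ∧ IsClosed {x | R y x}) ↔
      ∀ (x y : X) (xs : ℕ → X), Tendsto xs atTop (𝓝 x) →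
        ((∀ n, R (xs n) y) → R x y) ∧ ((∀ n, R y (xs n)) → R y x) :=
  ⟨fun h _ y _ hx => ⟨fun hn => (h y).1.mem_of_tendsto hx (.of_forall hn),
      fun hn => (h y).2.mem_of_tendsto hx (.of_forall hn)⟩,
    fun h y => ⟨IsSeqClosed.isClosed fun _ _ hn hx => (h _ y _ hx).1 hn,
      IsSeqClosed.isClosed fun _ _ hn hx => (h _ y _ hx).2 hn⟩⟩

/-- `p A a` is the probability of choosing `a` from the menu `A`. -/
structure IsLuceRule {X : Type*} (p : Finset X → X → ℝ) : Prop where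
  nonneg : ∀ A a, 0 ≤ p A a
  sum_eq_one : ∀ A : Finset X, A.Nonempty → ∑ a ∈ A, p A a = 1
  choice_axiom : ∀ A B : Finset X, B.Nonempty → B ⊆ A → ∀ a ∈ B,
    p A a = p B a * ∑ b ∈ B, p A b

namespace IsLuceRule

variable {X : Type*} {p : Finset X → X → ℝ}

theorem exists_pos (hp : IsLuceRule p) {A : Finset X} (hA : A.Nonempty) : ∃ a ∈ A, 0 < p A a := by
  by_contra! h
  have := Finset.sum_nonpos h
  rw [hp.sum_eq_one A hA] at this
  exact one_pos.not_ge this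

theorem pos_of_subset (hp : IsLuceRule p) {A B : Finset X} (hBA : B ⊆ A) {a : X} (ha : a ∈ B)
    (h : 0 < p A a) : 0 < p B a := by
  rw [hp.choice_axiom A B ⟨a, ha⟩ hBA a ha] at h
  exact pos_of_mul_pos_left h (Finset.sum_nonneg fun b _ => hp.nonneg A b)

theorem pos_of_pos_pair (hp : IsLuceRule p) {A : Finset X} {a b : X} (ha : a ∈ A) (hb : b ∈ A)
    (h : 0 < p A a) (hba : 0 < p {b, a} b) : 0 < p A b := by
  have hsub : {b, a} ⊆ A := Finset.insert_subset hb (Finset.singleton_subset_iff.2 ha)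
  have hca := hp.choice_axiom A {b, a} (Finset.insert_nonempty _ _) hsub
  rw [hca a (by simp)] at h
  rw [hca b (Finset.mem_insert_self _ _)]
  exact mul_pos hba (pos_of_mul_pos_right h (hp.nonneg _ a))

theorem pos_iff_forall_pos_pair (hp : IsLuceRule p) {A : Finset X} {a : X} (ha : a ∈ A) :
    0 < p A a ↔ ∀ b ∈ A, 0 < p {a, b} a := by
  refine ⟨fun h b hb => hp.pos_of_subset ?_ (Finset.mem_insert_self _ _) h, fun h => ?_⟩
  · exact Finset.insert_subset ha (Finset.singleton_subset_iff.2 hb)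
  · obtain ⟨b, hb, hpb⟩ := hp.exists_pos ⟨a, ha⟩
    exact hp.pos_of_pos_pair hb ha hpb (h b hb)

theorem pos_pair_or_pos_pair (hp : IsLuceRule p) (a b : X) : 0 < p {a, b} a ∨ 0 < p {b, a} b := by
  obtain ⟨c, hc, hpc⟩ := hp.exists_pos (Finset.insert_nonempty a {b})
  rcases Finset.mem_insert.1 hc with rfl | hc
  · exact .inl hpc
  · rw [Finset.mem_singleton.1 hc, Finset.pair_comm] at hpc
    exact .inr hpc

theorem pos_pair_trans (hp : IsLuceRule p) {x y z : X} (hxy : 0 < p {x, y} x)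
    (hyz : 0 < p {y, z} y) : 0 < p {x, z} x := by
  set A : Finset X := {x, y, z}
  have hy : 0 < p A z → 0 < p A y := fun h => hp.pos_of_pos_pair (by simp [A]) (by simp [A]) h hyz
  have hx : 0 < p A y → 0 < p A x := fun h => hp.pos_of_pos_pair (by simp [A]) (by simp [A]) h hxy
  obtain ⟨c, hc, hpc⟩ := hp.exists_pos (Finset.insert_nonempty x {y, z})
  refine hp.pos_of_subset (A := A) (B := {x, z}) (by simp [A, Finset.insert_subset_iff])
    (Finset.mem_insert_self _ _) ?_
  simp only [Finset.mem_insert, Finset.mem_singleton] at hc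
  rcases hc with rfl | rfl | rfl
  exacts [hpc, hx hpc, hx (hy hpc)]

theorem filter_pos_eq_filter_argmax_iff (hp : IsLuceRule p) (u : X → ℝ) :
    (∀ A : Finset X, A.Nonempty →
      A.filter (fun a => 0 < p A a) = A.filter (fun a => ∀ b ∈ A, u b ≤ u a)) ↔
      ∀ a b, 0 < p {a, b} a ↔ u b ≤ u a := by
  refine ⟨fun h a b => ?_, fun h A _ => ?_⟩
  · simpa using Finset.ext_iff.1 (h {a, b} (Finset.insert_nonempty _ _)) a
  · ext a
    simp only [Finset.mem_filter]
    exact and_congr_right fun ha => (hp.pos_iff_forall_pos_pair ha).trans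
      (forall₂_congr fun b _ => h a b)

theorem exists_continuous_utility_of_isClosed (hp : IsLuceRule p) [TopologicalSpace X]
    [SecondCountableTopology X]
    (hclosed : ∀ y, IsClosed {x | 0 < p {x, y} x} ∧ IsClosed {x | 0 < p {y, x} y}) :
    ∃ u : X → ℝ, Continuous u ∧ ∀ a b, 0 < p {a, b} a ↔ u b ≤ u a := by
  let _ : Preorder X :=
    { le := fun x y => 0 < p {y, x} y
      le_refl := fun x => (hp.pos_pair_or_pos_pair x x).elim id id
      le_trans := fun _ _ _ hxy hyz => hp.pos_pair_trans hyz hxy }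
  have : @Std.Total X (· ≤ ·) := ⟨fun x y => (hp.pos_pair_or_pos_pair y x)⟩
  have : ClosedIicTopology X := ⟨fun y => (hclosed y).2⟩
  have : ClosedIciTopology X := ⟨fun y => (hclosed y).1⟩
  obtain ⟨u, hu, hle⟩ := exists_continuous_utility (X := X)
  exact ⟨u, hu, fun a b => hle b a⟩

end IsLuceRule

theorem continuity_iff_continuous_utility_general
    {X : Type*} [MetricSpace X] [TopologicalSpace.SeparableSpace X]
    (p : Finset X → X → ℝ)
    (hpos : ∀ A a, 0 ≤ p A a)
    (hsum : ∀ A : Finset X, A.Nonempty → ∑ a ∈ A, p A a = 1)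
    (hCA : ∀ A B : Finset X, B.Nonempty → B ⊆ A → ∀ a ∈ B,
      p A a = p B a * ∑ b ∈ B, p A b) :
    ((∀ (x y : X) (xs : ℕ → X), Filter.Tendsto xs Filter.atTop (nhds x) →
        ((∀ n, 0 < p {xs n, y} (xs n)) → 0 < p {x, y} x) ∧
        ((∀ n, 0 < p {y, xs n} y) → 0 < p {y, x} y)) ↔
      (∃ u : X → ℝ, Continuous u ∧
        ∀ A : Finset X, A.Nonempty →
          A.filter (fun a => 0 < p A a) = A.filter (fun a => ∀ b ∈ A, u b ≤ u a))) := by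
  have hp : IsLuceRule p := ⟨hpos, hsum, hCA⟩
  refine (forall_isClosed_setOf_iff_forall_tendsto fun a b => 0 < p {a, b} a).symm.trans
    ⟨fun hclosed => ?_, fun ⟨u, hu, hmax⟩ y => ?_⟩
  · obtain ⟨u, hu, hpair⟩ := hp.exists_continuous_utility_of_isClosed hclosed
    exact ⟨u, hu, (hp.filter_pos_eq_filter_argmax_iff u).2 hpair⟩
  · simp only [(hp.filter_pos_eq_filter_argmax_iff u).1 hmax]
    exact ⟨isClosed_le continuous_const hu, isClosed_le hu continuous_const⟩

/-- Under the Choice Axiom on a separable metric space, `p` satisfies Continuity iff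
there is a continuous `u : X → ℝ` with `supp p_A = argmax_{a∈A} u(a)` for all `A`. -/
theorem continuity_iff_continuous_utility
    {X : Type*} [MetricSpace X] [TopologicalSpace.SeparableSpace X]
    (p : Finset X → X → ℝ)
    (hpos : ∀ A a, 0 ≤ p A a)
    (hout : ∀ A a, a ∉ A → p A a = 0)
    (hsum : ∀ A : Finset X, A.Nonempty → ∑ a ∈ A, p A a = 1)
    (hCA : ∀ A B : Finset X, B.Nonempty → B ⊆ A → ∀ a ∈ B,
      p A a = p B a * ∑ b ∈ B, p A b) :
    ((∀ (x y : X) (xs : ℕ → X), Filter.Tendsto xs Filter.atTop (nhds x) →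
        ((∀ n, 0 < p {xs n, y} (xs n)) → 0 < p {x, y} x) ∧
        ((∀ n, 0 < p {y, xs n} y) → 0 < p {y, x} y)) ↔
      (∃ u : X → ℝ, Continuous u ∧
        ∀ A : Finset X, A.Nonempty →
          A.filter (fun a => 0 < p A a) = A.filter (fun a => ∀ b ∈ A, u b ≤ u a))) :=
  continuity_iff_continuous_utility_general p hpos hsum hCA
end

section
/- A random choice rule p satisfies Luce's Choice Axiom if and only if it satisfies Odds Independence: for all A ∈ 𝒜 and all a, b ∈ A such that not both p(a,A) = 0 and p(b,A) = 0, the equality p(a,{a,b})·p(b,A) = p(b,{a,b})·p(a,A) holds together with: p(b,{a,b}) = 0 implies p(b,A) = 0, and p(b,A) = 0 together with p(a,A) > 0 implies p(b,{a,b}) = 0 (i.e., the odds p(a,{a,b})/p(b,{a,b}) and p(a,A)/p(b,A) agree as extended reals whenever either is well defined). -/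
/-!
Under the Choice Axiom, every `p A x` with `x ∈ B` is `p B x` times the common factor
`∑ y ∈ B, p A y`, which gives the odds identities for `B = {a, b}`.
Conversely, the odds identity puts both `(p A a, p A b)` and `(p B a, p B b)` on the line through
`(p {a, b} a, p {a, b} b)`, which is not the origin because `p {a, b}` sums to `1`; hence
`p A b * p B a = p A a * p B b`, and summing over `b ∈ B` gives the Choice Axiom.
-/

open Finset

theorem mul_eq_mul_of_mul_eq_mul_of_ne_zero {R : Type*} [CommRing R] [IsDomain R]
    {s t x₁ y₁ x₂ y₂ : R} (hst : s ≠ 0 ∨ t ≠ 0) (h₁ : s * y₁ = t * x₁) (h₂ : s * y₂ = t * x₂) :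
    y₁ * x₂ = x₁ * y₂ := by
  rcases hst with hs | ht
  · exact mul_left_cancel₀ hs (by linear_combination x₂ * h₁ - x₁ * h₂)
  · exact mul_left_cancel₀ ht (by linear_combination y₂ * h₁ - y₁ * h₂)

section

variable {X : Type*}

def ChoiceAxiom (p : Finset X → X → ℝ) : Prop :=
  ∀ A B : Finset X, B.Nonempty → B ⊆ A → ∀ a ∈ B, p A a = p B a * ∑ b ∈ B, p A b

def OddsIndependence [DecidableEq X] (p : Finset X → X → ℝ) : Prop :=
  ∀ A : Finset X, A.Nonempty → ∀ a ∈ A, ∀ b ∈ A, ¬ (p A a = 0 ∧ p A b = 0) →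
    (p {a, b} a * p A b = p {a, b} b * p A a ∧
      (p {a, b} b = 0 → p A b = 0) ∧
      (p A b = 0 → 0 < p A a → p {a, b} b = 0))

namespace ChoiceAxiom

variable {p : Finset X → X → ℝ} {A B : Finset X} {a b : X}

theorem mul_eq_mul (h : ChoiceAxiom p) (hB : B.Nonempty) (hBA : B ⊆ A) (ha : a ∈ B) (hb : b ∈ B) :
    p B a * p A b = p B b * p A a := by
  rw [h A B hB hBA a ha, h A B hB hBA b hb]
  ring

theorem eq_zero_of_eq_zero (h : ChoiceAxiom p) (hB : B.Nonempty) (hBA : B ⊆ A) (hb : b ∈ B)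
    (h0 : p B b = 0) : p A b = 0 := by
  rw [h A B hB hBA b hb, h0, zero_mul]

theorem eq_zero_of_eq_zero_of_ne_zero (h : ChoiceAxiom p) (hB : B.Nonempty) (hBA : B ⊆ A)
    (ha : a ∈ B) (hb : b ∈ B) (h0 : p A b = 0) (hne : p A a ≠ 0) : p B b = 0 := by
  have hsum : ∑ y ∈ B, p A y ≠ 0 := right_ne_zero_of_mul (h A B hB hBA a ha ▸ hne)
  exact (mul_eq_zero.1 (h A B hB hBA b hb ▸ h0)).resolve_right hsum

theorem oddsIndependence [DecidableEq X] (h : ChoiceAxiom p) : OddsIndependence p := by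
  intro A _ a ha b hb _
  have hB : ({a, b} : Finset X).Nonempty := insert_nonempty a {b}
  have hBA : {a, b} ⊆ A := insert_subset ha (singleton_subset_iff.2 hb)
  have ha' : a ∈ ({a, b} : Finset X) := mem_insert_self a {b}
  have hb' : b ∈ ({a, b} : Finset X) := mem_insert_of_mem (mem_singleton_self b)
  exact ⟨h.mul_eq_mul hB hBA ha' hb', h.eq_zero_of_eq_zero hB hBA hb',
    fun h0 hpos => h.eq_zero_of_eq_zero_of_ne_zero hB hBA ha' hb' h0 hpos.ne'⟩

end ChoiceAxiom

variable [DecidableEq X] {p : Finset X → X → ℝ}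

theorem pair_ne_zero_or_ne_zero (hsum : ∀ A : Finset X, A.Nonempty → ∑ a ∈ A, p A a = 1)
    {a b : X} (hab : a ≠ b) : p {a, b} a ≠ 0 ∨ p {a, b} b ≠ 0 := by
  by_contra! h
  have := hsum {a, b} (insert_nonempty a {b})
  rw [sum_pair hab, h.1, h.2] at this
  norm_num at this

namespace OddsIndependence

theorem mul_eq_mul (h : OddsIndependence p)
    (hsum : ∀ A : Finset X, A.Nonempty → ∑ a ∈ A, p A a = 1) {A B : Finset X} (hB : B.Nonempty)
    (hBA : B ⊆ A) {a b : X} (ha : a ∈ B) (hb : b ∈ B) : p A b * p B a = p A a * p B b := by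
  obtain rfl | hab := eq_or_ne a b
  · ring
  by_cases hA0 : p A a = 0 ∧ p A b = 0
  · rw [hA0.1, hA0.2]
    ring
  by_cases hB0 : p B a = 0 ∧ p B b = 0
  · rw [hB0.1, hB0.2]
    ring
  exact mul_eq_mul_of_mul_eq_mul_of_ne_zero (pair_ne_zero_or_ne_zero hsum hab)
    (h A ⟨a, hBA ha⟩ a (hBA ha) b (hBA hb) hA0).1 (h B hB a ha b hb hB0).1

theorem choiceAxiom (h : OddsIndependence p)
    (hsum : ∀ A : Finset X, A.Nonempty → ∑ a ∈ A, p A a = 1) : ChoiceAxiom p := by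
  intro A B hB hBA a ha
  calc p A a = p A a * ∑ b ∈ B, p B b := by rw [hsum B hB, mul_one]
    _ = ∑ b ∈ B, p A b * p B a := by
      rw [mul_sum]
      exact sum_congr rfl fun b hb => (h.mul_eq_mul hsum hB hBA ha hb).symm
    _ = p B a * ∑ b ∈ B, p A b := by rw [← sum_mul, mul_comm]

end OddsIndependence

end

theorem choice_axiom_iff_odds_independence_general
    {X : Type*} [DecidableEq X] (p : Finset X → X → ℝ)
    (hsum : ∀ A : Finset X, A.Nonempty → ∑ a ∈ A, p A a = 1) :
    (∀ A B : Finset X, B.Nonempty → B ⊆ A → ∀ a ∈ B,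
      p A a = p B a * ∑ b ∈ B, p A b) ↔
    (∀ A : Finset X, A.Nonempty → ∀ a ∈ A, ∀ b ∈ A,
      ¬ (p A a = 0 ∧ p A b = 0) →
      (p {a, b} a * p A b = p {a, b} b * p A a ∧
        (p {a, b} b = 0 → p A b = 0) ∧
        (p A b = 0 → 0 < p A a → p {a, b} b = 0))) :=
  ⟨fun h => ChoiceAxiom.oddsIndependence h, fun h => OddsIndependence.choiceAxiom h hsum⟩

/-- A random choice rule satisfies Luce's Choice Axiom iff it satisfies Odds
Independence: for `a, b ∈ A` with not both `p(a,A) = 0` and `p(b,A) = 0`, the odds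
of `a` against `b` in `{a,b}` and in `A` agree as extended reals. -/
theorem choice_axiom_iff_odds_independence
    {X : Type*} [DecidableEq X] (p : Finset X → X → ℝ)
    (hpos : ∀ A a, 0 ≤ p A a)
    (hout : ∀ A a, a ∉ A → p A a = 0)
    (hsum : ∀ A : Finset X, A.Nonempty → ∑ a ∈ A, p A a = 1) :
    (∀ A B : Finset X, B.Nonempty → B ⊆ A → ∀ a ∈ B,
      p A a = p B a * ∑ b ∈ B, p A b) ↔
    (∀ A : Finset X, A.Nonempty → ∀ a ∈ A, ∀ b ∈ A,
      ¬ (p A a = 0 ∧ p A b = 0) →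
      (p {a, b} a * p A b = p {a, b} b * p A a ∧
        (p {a, b} b = 0 → p A b = 0) ∧
        (p A b = 0 → 0 < p A a → p {a, b} b = 0))) :=
  choice_axiom_iff_odds_independence_general p hsum
end

section
/- Let u, α : X → ℝ and for λ > 0 let p_λ(a,A) = e^{u(a)/λ + α(a)}/Σ_{b∈A} e^{u(b)/λ + α(b)} (the multinomial logit with noise level λ). Then for every finite nonempty A and a ∈ A, lim_{λ→0⁺} p_λ(a,A) = e^{α(a)}/Σ_{b∈argmax_A u} e^{α(b)} if a ∈ argmax_{b∈A} u(b), and the limit is 0 otherwise. -/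
/-!
Shifting all utilities by `M = max_A u` does not change `p_λ`. After the shift every exponent
`(u b - M)/λ + α b` tends to `α b` if `b` maximises `u` and to `-∞` otherwise, so numerator and
denominator converge, the latter to the positive sum of `e^{α b}` over `argmax_A u`.
-/

open scoped Classical

open Filter Topology Finset

noncomputable def logitProb {X : Type*} (u α : X → ℝ) (A : Finset X) (lam : ℝ) (a : X) : ℝ :=
  Real.exp (u a / lam + α a) / ∑ b ∈ A, Real.exp (u b / lam + α b)

theorem logitProb_sub_const {X : Type*} (u α : X → ℝ) (A : Finset X) (a : X) (M : ℝ)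
    {lam : ℝ} (hlam : lam ≠ 0) :
    logitProb (fun x => u x - M) α A lam a = logitProb u α A lam a := by
  have shift (b : X) :
      Real.exp (u b / lam + α b) = Real.exp ((u b - M) / lam + α b) * Real.exp (M / lam) := by
    rw [← Real.exp_add]
    congr 1
    field_simp
    ring
  simp only [logitProb, shift, ← Finset.sum_mul, mul_div_mul_right _ _ (Real.exp_ne_zero _)]

theorem tendsto_exp_div_add_nhdsGT_zero {c : ℝ} (hc : c ≤ 0) (d : ℝ) :
    Tendsto (fun lam => Real.exp (c / lam + d)) (𝓝[>] 0)
      (𝓝 (if c = 0 then Real.exp d else 0)) := by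
  rcases hc.eq_or_lt with rfl | hneg
  · simp
  · rw [if_neg hneg.ne]
    have hdiv : Tendsto (fun lam : ℝ => c / lam) (𝓝[>] 0) atBot :=
      tendsto_inv_nhdsGT_zero.const_mul_atTop_of_neg hneg
    exact Real.tendsto_exp_atBot.comp (tendsto_atBot_add_const_right _ d hdiv)

theorem eq_sup'_iff_forall_le {X β : Type*} [LinearOrder β] {A : Finset X} (hA : A.Nonempty)
    (f : X → β) {b : X} (hb : b ∈ A) :
    f b = A.sup' hA f ↔ ∀ c ∈ A, f c ≤ f b :=
  ⟨fun h _ hc => h ▸ A.le_sup' f hc,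
    fun h => le_antisymm (A.le_sup' f hb) (A.sup'_le hA f h)⟩

theorem tendsto_exp_sub_sup'_div_add {X : Type*} (u : X → ℝ) {A : Finset X} (hA : A.Nonempty)
    {b : X} (hb : b ∈ A) (d : ℝ) :
    Tendsto (fun lam => Real.exp ((u b - A.sup' hA u) / lam + d)) (𝓝[>] 0)
      (𝓝 (if ∀ c ∈ A, u c ≤ u b then Real.exp d else 0)) := by
  simpa only [sub_eq_zero, eq_sup'_iff_forall_le hA u hb] using
    tendsto_exp_div_add_nhdsGT_zero (sub_nonpos.2 (A.le_sup' u hb)) d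

theorem tendsto_logitProb_nhdsGT_zero {X : Type*} (u α : X → ℝ) {A : Finset X} {a : X}
    (ha : a ∈ A) :
    Tendsto (logitProb u α A · a) (𝓝[>] 0)
      (𝓝 ((if ∀ c ∈ A, u c ≤ u a then Real.exp (α a) else 0) /
        ∑ b ∈ A.filter (fun z => ∀ c ∈ A, u c ≤ u z), Real.exp (α b))) := by
  have hA : A.Nonempty := ⟨a, ha⟩
  have hpos : 0 < ∑ b ∈ A.filter (fun z => ∀ c ∈ A, u c ≤ u z), Real.exp (α b) := by
    obtain ⟨m, hm, hmM⟩ := A.exists_mem_eq_sup' hA u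
    refine Finset.sum_pos (fun b _ => Real.exp_pos _) ⟨m, Finset.mem_filter.2 ⟨hm, ?_⟩⟩
    exact (eq_sup'_iff_forall_le hA u hm).1 hmM.symm
  have hnum := tendsto_exp_sub_sup'_div_add u hA ha (α a)
  have hden := tendsto_finsetSum A fun b hb => tendsto_exp_sub_sup'_div_add u hA hb (α b)
  rw [← Finset.sum_filter] at hden
  refine (hnum.div hden hpos.ne').congr' ?_
  filter_upwards [self_mem_nhdsWithin] with lam hlam
  exact logitProb_sub_const u α A a _ hlam.ne'

theorem logit_vanishing_noise_limit_general
    {X : Type*} [DecidableEq X] (u α : X → ℝ)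
    (A : Finset X) (a : X) (ha : a ∈ A) :
    Filter.Tendsto
      (fun lam : ℝ =>
        Real.exp (u a / lam + α a) / ∑ b ∈ A, Real.exp (u b / lam + α b))
      (nhdsWithin 0 (Set.Ioi 0))
      (nhds (if a ∈ A.filter (fun z => ∀ b ∈ A, u b ≤ u z) then
        Real.exp (α a) / ∑ b ∈ A.filter (fun z => ∀ c ∈ A, u c ≤ u z), Real.exp (α b)
      else 0)) := by
  simpa only [logitProb, Finset.mem_filter, ha, true_and, ite_div, zero_div] using
    tendsto_logitProb_nhdsGT_zero u α ha

/-- As the noise level `λ → 0⁺`, the multinomial logit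
`p_λ(a,A) = e^{u(a)/λ+α(a)}/Σ_{b∈A} e^{u(b)/λ+α(b)}` converges to the Luce
tie-breaking rule on `argmax_A u`: the limit is `e^{α(a)}/Σ_{b∈argmax_A u} e^{α(b)}`
if `a ∈ argmax_A u` and `0` otherwise. -/
theorem logit_vanishing_noise_limit
    {X : Type*} [DecidableEq X] (u α : X → ℝ)
    (A : Finset X) (hA : A.Nonempty) (a : X) (ha : a ∈ A) :
    Filter.Tendsto
      (fun lam : ℝ =>
        Real.exp (u a / lam + α a) / ∑ b ∈ A, Real.exp (u b / lam + α b))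
      (nhdsWithin 0 (Set.Ioi 0))
      (nhds (if a ∈ A.filter (fun z => ∀ b ∈ A, u b ≤ u z) then
        Real.exp (α a) / ∑ b ∈ A.filter (fun z => ∀ c ∈ A, u c ≤ u z), Real.exp (α b)
      else 0)) :=
  logit_vanishing_noise_limit_general u α A a ha
end
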